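/- Let k > 0 and let h : ℝ → ℝ be continuous with h(s) ≥ cosh(ks) for all s. Then for all real a₁ < a₂, ∫_{a₁}^{a₂} ds / h(s) ≤ (2/k)·arctan( (k/2)·∫_{a₁}^{a₂} h(s) ds ). Equivalently, writing I = ∫_{a₁}^{a₂} h(s) ds and W = (1/k)·arcsinh(kI/2), one has ∫_{a₁}^{a₂} ds/h(s) ≤ ∫_{−W}^{W} ds/cosh(ks), where the symmetric interval (−W, W) satisfies ∫_{−W}^{W} cosh(ks) ds = I. -/

import Mathlib

/-!
Since `h ≥ cosh (k ·)`, the integral of `1 / h` is at most that of `1 / cosh (k ·)`, which is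
`(arctan (sinh (k a₂)) - arctan (sinh (k a₁))) / k`, while `sinh (k a₂) - sinh (k a₁) = k ∫ cosh (k ·)`
is at most `k ∫ h`. Among intervals `[x, y]` of given length the integral
`arctan y - arctan x` of `1 / (1 + t²)` is largest when `[x, y]` is centred at `0`, giving
`arctan y - arctan x ≤ 2 arctan ((y - x) / 2)`; this is the bound, with equality for the
symmetric interval `(-W, W)`.
-/

open Real intervalIntegral

theorem Real.hasDerivAt_arctan_sinh (x : ℝ) :
    HasDerivAt (fun t => arctan (sinh t)) (1 / cosh x) x := by
  refine ((hasDerivAt_arctan (sinh x)).comp x (hasDerivAt_sinh x)).congr_deriv ?_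
  rw [← cosh_sq']
  field_simp

theorem integral_cosh (a b : ℝ) : ∫ x in a..b, cosh x = sinh b - sinh a :=
  integral_eq_sub_of_hasDerivAt (fun x _ => hasDerivAt_sinh x)
    (continuous_cosh.intervalIntegrable _ _)

theorem integral_one_div_cosh (a b : ℝ) :
    ∫ x in a..b, 1 / cosh x = arctan (sinh b) - arctan (sinh a) :=
  integral_eq_sub_of_hasDerivAt (fun x _ => hasDerivAt_arctan_sinh x)
    ((continuous_const.div continuous_cosh fun x => (cosh_pos x).ne').intervalIntegrable _ _)

theorem integral_cosh_mul {k : ℝ} (hk : k ≠ 0) (a b : ℝ) :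
    ∫ x in a..b, cosh (k * x) = (sinh (k * b) - sinh (k * a)) / k := by
  rw [integral_comp_mul_left (fun x => cosh x) hk, integral_cosh, smul_eq_mul, inv_mul_eq_div]

theorem integral_one_div_cosh_mul {k : ℝ} (hk : k ≠ 0) (a b : ℝ) :
    ∫ x in a..b, 1 / cosh (k * x) = (arctan (sinh (k * b)) - arctan (sinh (k * a))) / k := by
  rw [integral_comp_mul_left (fun x => 1 / cosh x) hk, integral_one_div_cosh, smul_eq_mul,
    inv_mul_eq_div]

theorem Real.arctan_add_add_arctan_sub_le {c : ℝ} (hc : 0 ≤ c) (m : ℝ) :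
    arctan (c + m) + arctan (c - m) ≤ 2 * arctan c := by
  set f : ℝ → ℝ := fun m => arctan (c + m) + arctan (c - m)
  have hf_deriv : ∀ m, HasDerivAt f (1 / (1 + (c + m) ^ 2) - 1 / (1 + (c - m) ^ 2)) m := by
    intro m
    refine (((hasDerivAt_arctan _).comp m ((hasDerivAt_id' m).const_add c)).add
      ((hasDerivAt_arctan _).comp m ((hasDerivAt_id' m).const_sub c))).congr_deriv ?_
    ring
  have hf_anti : AntitoneOn f (Set.Ici 0) := by
    refine antitoneOn_of_hasDerivWithinAt_nonpos (convex_Ici 0)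
      (fun m _ => (hf_deriv m).continuousAt.continuousWithinAt)
      (fun m _ => (hf_deriv m).hasDerivWithinAt) fun m hm => ?_
    rw [interior_Ici, Set.mem_Ioi] at hm
    rw [sub_nonpos]
    exact one_div_le_one_div_of_le (by positivity) (by nlinarith)
  have hf_even : f |m| = f m := by
    rcases abs_choice m with hm | hm <;> rw [hm]
    simp only [f, sub_neg_eq_add, ← sub_eq_add_neg, add_comm]
  have := hf_anti Set.self_mem_Ici (abs_nonneg m) (abs_nonneg m)
  simpa [f, hf_even, two_mul] using this

theorem Real.arctan_sub_arctan_le {x y : ℝ} (hxy : x ≤ y) :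
    arctan y - arctan x ≤ 2 * arctan ((y - x) / 2) := by
  have := arctan_add_add_arctan_sub_le (c := (y - x) / 2) (by linarith) ((x + y) / 2)
  rwa [show (y - x) / 2 + (x + y) / 2 = y by ring, show (y - x) / 2 - (x + y) / 2 = -x by ring,
    arctan_neg, ← sub_eq_add_neg] at this

theorem integral_one_div_cosh_mul_le {k a b : ℝ} (hk : 0 < k) (hab : a ≤ b) :
    ∫ s in a..b, 1 / cosh (k * s) ≤ 2 / k * arctan (k / 2 * ∫ s in a..b, cosh (k * s)) := by
  have hsinh : sinh (k * a) ≤ sinh (k * b) := sinh_le_sinh.2 (by gcongr)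
  rw [integral_one_div_cosh_mul hk.ne', integral_cosh_mul hk.ne', div_le_iff₀ hk]
  refine (arctan_sub_arctan_le hsinh).trans_eq ?_
  field_simp

/-- If `h ≥ cosh (k ·)` is continuous, then for `a₁ < a₂`,
`∫_{a₁}^{a₂} ds / h ≤ (2/k) · arctan ((k/2) · ∫_{a₁}^{a₂} h)`; equivalently, with
`I = ∫_{a₁}^{a₂} h` and `W = (1/k) · arsinh (k I / 2)`, one has
`∫_{a₁}^{a₂} ds / h ≤ ∫_{-W}^{W} ds / cosh (k s)`, where the symmetric interval
satisfies `∫_{-W}^{W} cosh (k s) ds = I`. -/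
theorem integral_one_div_le_comparison (k : ℝ) (hk : 0 < k) (h : ℝ → ℝ)
    (hcont : Continuous h) (hge : ∀ s, Real.cosh (k * s) ≤ h s)
    (a₁ a₂ : ℝ) (ha : a₁ < a₂) (W : ℝ)
    (hW : W = (1 / k) * Real.arsinh (k * (∫ s in a₁..a₂, h s) / 2)) :
    (∫ s in a₁..a₂, 1 / h s) ≤
        (2 / k) * Real.arctan ((k / 2) * ∫ s in a₁..a₂, h s) ∧
    (∫ s in a₁..a₂, 1 / h s) ≤ (∫ s in (-W)..W, 1 / Real.cosh (k * s)) ∧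
    (∫ s in (-W)..W, Real.cosh (k * s)) = ∫ s in a₁..a₂, h s := by
  set I := ∫ s in a₁..a₂, h s
  have hpos : ∀ s, 0 < h s := fun s => (cosh_pos _).trans_le (hge s)
  have hcosh : Continuous fun s => cosh (k * s) := by fun_prop
  have hsinhW : sinh (k * W) = k * I / 2 := by
    rw [hW, ← mul_assoc, mul_one_div_cancel hk.ne', one_mul, sinh_arsinh]
  have hbound : ∫ s in a₁..a₂, 1 / h s ≤ 2 / k * arctan (k / 2 * I) := calc
    _ ≤ ∫ s in a₁..a₂, 1 / cosh (k * s) :=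
      integral_mono_on ha.le
        ((continuous_const.div hcont fun s => (hpos s).ne').intervalIntegrable _ _)
        ((continuous_const.div hcosh fun s => (cosh_pos _).ne').intervalIntegrable _ _)
        fun s _ => one_div_le_one_div_of_le (cosh_pos _) (hge s)
    _ ≤ 2 / k * arctan (k / 2 * ∫ s in a₁..a₂, cosh (k * s)) :=
      integral_one_div_cosh_mul_le hk ha.le
    _ ≤ 2 / k * arctan (k / 2 * I) := by
      gcongr
      exact integral_mono_on ha.le (hcosh.intervalIntegrable _ _)
          (hcont.intervalIntegrable _ _) fun s _ => hge s
  refine ⟨hbound, ?_, ?_⟩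
  · rw [integral_one_div_cosh_mul hk.ne', mul_neg, sinh_neg, hsinhW, arctan_neg]
    convert hbound using 1
    ring_nf
  · rw [integral_cosh_mul hk.ne', mul_neg, sinh_neg, hsinhW]
    field_simp
    ring
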